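/- If X₁, ..., X_k are pairwise commuting normal 2N×2N complex matrices, each satisfying X_j* = X_j^♯, then there exists a single symplectic unitary U such that for all j, U* X_j U = [[D_j, 0], [0, conj(D_j)]] with each D_j diagonal. -/

import Mathlib

open Matrix

noncomputable def Zmat (N : ℕ) : Matrix (Fin N ⊕ Fin N) (Fin N ⊕ Fin N) ℂ :=
  Matrix.fromBlocks 0 1 (-1) 0

noncomputable def dual {N : ℕ} (X : Matrix (Fin N ⊕ Fin N) (Fin N ⊕ Fin N) ℂ) :
    Matrix (Fin N ⊕ Fin N) (Fin N ⊕ Fin N) ℂ :=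
  -(Zmat N) * Xᵀ * (Zmat N)

noncomputable def Tmap {N : ℕ} (ξ : Fin N ⊕ Fin N → ℂ) : Fin N ⊕ Fin N → ℂ :=
  Sum.elim (fun i => -(starRingEnd ℂ) (ξ (Sum.inr i))) (fun i => (starRingEnd ℂ) (ξ (Sum.inl i)))

/-!
The map `J v = -Z v̄` is antiunitary with `J² = -1`, and `X* = X^♯` says exactly that `X`
commutes with `J` (equivalently `X Z = Z X̄`). Commuting normal operators have a common unit
eigenvector `u` in any jointly invariant subspace; then `J u` is a common eigenvector orthogonal to
`u`, and by normality `span {u, J u}` is invariant under the adjoints, so its orthogonal complement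
is again invariant under every `X_j` and under `J`. Induction gives an orthonormal basis
`e₁, …, e_N, J e₁, …, J e_N` of common eigenvectors. The unitary `U` with these columns `c_a`
satisfies `(Uᵀ Z U)_{ab} = ⟪J c_a, c_b⟫`, hence is symplectic, and `U* X_j U = diag(D_j, D̄_j)`
because `X_j (J e_i) = J (X_j e_i)`.
-/

open scoped InnerProductSpace ComplexConjugate

namespace Module.End

theorem exists_mem_ne_zero_forall_apply_eq_smul {K V : Type*} [Field K] [IsAlgClosed K]
    [AddCommGroup V] [Module K V] [FiniteDimensional K V] {k : ℕ} (T : Fin k → End K V)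
    (hcomm : ∀ i j, Commute (T i) (T j)) {W : Submodule K V} (hW : W ≠ ⊥)
    (hWT : ∀ j, W ∈ (T j).invtSubmodule) :
    ∃ v ∈ W, v ≠ 0 ∧ ∀ j, ∃ μ : K, T j v = μ • v := by
  induction k generalizing W with
  | zero =>
    obtain ⟨v, hv, hv0⟩ := Submodule.exists_mem_ne_zero_of_ne_bot hW
    exact ⟨v, hv, hv0, fun j => j.elim0⟩
  | succ k ih =>
    have : Nontrivial W := Submodule.nontrivial_iff_ne_bot.mpr hW
    obtain ⟨μ, hμ⟩ := exists_eigenvalue ((T 0).restrict (hWT 0))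
    obtain ⟨w, hw⟩ := hμ.exists_hasEigenvector
    set E := W ⊓ (T 0).eigenspace μ
    have hE : E ≠ ⊥ := by
      refine (Submodule.ne_bot_iff E).mpr ⟨w, ⟨w.2, ?_⟩, by simpa using hw.2⟩
      exact mem_eigenspace_iff.mpr (congrArg Subtype.val hw.apply_eq_smul)
    have hET : ∀ j, E ∈ (T j).invtSubmodule := fun j =>
      invtSubmodule.inf_mem (hWT j) (mapsTo_genEigenspace_of_comm (hcomm 0 j) μ 1)
    obtain ⟨v, hvE, hv0, hv⟩ :=
      ih (fun i => T i.succ) (fun i j => hcomm i.succ j.succ) hE (fun j => hET j.succ)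
    exact ⟨v, hvE.1, hv0, Fin.cases ⟨μ, mem_eigenspace_iff.mp hvE.2⟩ hv⟩

end Module.End

theorem LinearMap.adjoint_apply_eq_conj_smul_of_apply_eq_smul {𝕜 E : Type*} [RCLike 𝕜]
    [NormedAddCommGroup E] [InnerProductSpace 𝕜 E] [FiniteDimensional 𝕜 E] {T : E →ₗ[𝕜] E}
    (hT : Commute T (adjoint T)) {v : E} {μ : 𝕜} (h : T v = μ • v) :
    adjoint T v = conj μ • v := by
  have hadj_v : ⟪adjoint T v, v⟫_𝕜 = μ * ⟪v, v⟫_𝕜 := by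
    rw [adjoint_inner_left, h, inner_smul_right]
  have hv_adj : ⟪v, adjoint T v⟫_𝕜 = conj μ * ⟪v, v⟫_𝕜 := by
    rw [← inner_conj_symm, hadj_v, map_mul, inner_conj_symm]
  have hadj_adj : ⟪adjoint T v, adjoint T v⟫_𝕜 = μ * (conj μ * ⟪v, v⟫_𝕜) := by
    rw [adjoint_inner_left, ← Module.End.mul_apply, hT.eq, Module.End.mul_apply, h,
      map_smul, inner_smul_right, hv_adj]
  -- `‖T† v - μ̄ v‖² = 0`, where normality enters only through `‖T† v‖² = ‖T v‖²`
  rw [← sub_eq_zero, ← inner_self_eq_zero (𝕜 := 𝕜), inner_sub_sub_self]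
  simp only [inner_smul_left, inner_smul_right, hadj_v, hv_adj, hadj_adj, RCLike.conj_conj]
  ring

theorem Submodule.mem_orthogonal_span_pair {𝕜 E : Type*} [RCLike 𝕜] [NormedAddCommGroup E]
    [InnerProductSpace 𝕜 E] {u v x : E} :
    x ∈ (span 𝕜 {u, v})ᗮ ↔ ⟪u, x⟫_𝕜 = 0 ∧ ⟪v, x⟫_𝕜 = 0 := by
  rw [span_insert, ← inf_orthogonal, mem_inf, mem_orthogonal_singleton_iff_inner_right,
    mem_orthogonal_singleton_iff_inner_right]

structure QuaternionicStructure (E : Type*) [NormedAddCommGroup E] [InnerProductSpace ℂ E] where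
  toFun : E → E
  map_smul' : ∀ (c : ℂ) (x : E), toFun (c • x) = conj c • toFun x
  inner_map_map' : ∀ x y : E, ⟪toFun x, toFun y⟫_ℂ = conj ⟪x, y⟫_ℂ
  map_map' : ∀ x : E, toFun (toFun x) = -x

namespace QuaternionicStructure

variable {E : Type*} [NormedAddCommGroup E] [InnerProductSpace ℂ E] (J : QuaternionicStructure E)

attribute [coe] toFun

instance : CoeFun (QuaternionicStructure E) (fun _ => E → E) := ⟨toFun⟩

theorem map_smul (c : ℂ) (x : E) : J (c • x) = conj c • J x := J.map_smul' c x

theorem inner_map_map (x y : E) : ⟪J x, J y⟫_ℂ = conj ⟪x, y⟫_ℂ := J.inner_map_map' x y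

theorem map_map (x : E) : J (J x) = -x := J.map_map' x

theorem norm_map (x : E) : ‖J x‖ = ‖x‖ := by
  rw [norm_eq_sqrt_re_inner (𝕜 := ℂ), J.inner_map_map, RCLike.conj_re,
    ← norm_eq_sqrt_re_inner]

theorem inner_map_right (x y : E) : ⟪x, J y⟫_ℂ = -conj ⟪J x, y⟫_ℂ := by
  have h := J.inner_map_map x (J y)
  rw [J.map_map, inner_neg_right] at h
  rw [← Complex.conj_conj ⟪x, J y⟫_ℂ, ← h, map_neg]

theorem inner_self_map (x : E) : ⟪x, J x⟫_ℂ = 0 := by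
  have h := J.inner_map_right x x
  rw [inner_conj_symm] at h
  linear_combination h / 2

theorem map_mem_orthogonal_span_pair {u x : E} (hx : x ∈ (Submodule.span ℂ {u, J u})ᗮ) :
    J x ∈ (Submodule.span ℂ {u, J u})ᗮ := by
  rw [Submodule.mem_orthogonal_span_pair] at hx ⊢
  rw [J.inner_map_right, hx.2, J.inner_map_map, hx.1]
  simp

theorem finrank_span_pair {u : E} (hu : ‖u‖ = 1) :
    Module.finrank ℂ (Submodule.span ℂ {u, J u}) = 2 := by
  have hon : Orthonormal ℂ ![u, J u] := by
    simp [hu, J.inner_self_map, J.norm_map, orthonormal_subsingleton_iff]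
  rw [← Matrix.range_cons_cons_empty, finrank_span_eq_card hon.linearIndependent]
  simp

theorem orthonormal_sumElim {ι : Type*} {e : ι → E} (he : Orthonormal ℂ e)
    (heJ : ∀ i i', ⟪e i, J (e i')⟫_ℂ = 0) : Orthonormal ℂ (Sum.elim e fun i => J (e i)) := by
  classical
  rw [orthonormal_iff_ite] at he ⊢
  rintro (i | i) (i' | i')
  · simpa using he i i'
  · simpa using heJ i i'
  · rw [Sum.elim_inr, Sum.elim_inl, ← inner_conj_symm, heJ]
    simp
  · simp [J.inner_map_map, he, apply_ite (starRingEnd ℂ)]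

variable [FiniteDimensional ℂ E]

theorem orthogonal_span_pair_mem_invtSubmodule {T : Module.End ℂ E}
    (hT : Commute T (LinearMap.adjoint T)) (hTJ : ∀ x, T (J x) = J (T x)) {u : E} {μ : ℂ}
    (hu : T u = μ • u) : (Submodule.span ℂ {u, J u})ᗮ ∈ T.invtSubmodule := by
  have hJu : T (J u) = conj μ • J u := by rw [hTJ, hu, J.map_smul]
  have hadj_Ju := LinearMap.adjoint_apply_eq_conj_smul_of_apply_eq_smul hT hJu
  rw [Complex.conj_conj] at hadj_Ju
  rw [← Module.End.mem_invtSubmodule_adjoint_iff, Module.End.mem_invtSubmodule,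
    Submodule.span_le, Set.insert_subset_iff, Set.singleton_subset_iff]
  refine ⟨?_, ?_⟩
  · rw [SetLike.mem_coe, Submodule.mem_comap,
      LinearMap.adjoint_apply_eq_conj_smul_of_apply_eq_smul hT hu]
    exact Submodule.smul_mem _ _ (Submodule.subset_span (by simp))
  · rw [SetLike.mem_coe, Submodule.mem_comap, hadj_Ju]
    exact Submodule.smul_mem _ _ (Submodule.subset_span (by simp))

theorem exists_orthonormal_commonEigenvectors {k : ℕ} (T : Fin k → Module.End ℂ E)
    (hcomm : ∀ i j, Commute (T i) (T j))
    (hnormal : ∀ j, Commute (T j) (LinearMap.adjoint (T j)))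
    (hTJ : ∀ j x, T j (J x) = J (T j x)) (n : ℕ) (W : Submodule ℂ E)
    (hW : Module.finrank ℂ W = 2 * n) (hWT : ∀ j, W ∈ (T j).invtSubmodule)
    (hWJ : ∀ x ∈ W, J x ∈ W) :
    ∃ e : Fin n → E, (∀ i, e i ∈ W) ∧ Orthonormal ℂ e ∧ (∀ i i', ⟪e i, J (e i')⟫_ℂ = 0) ∧
      ∀ j i, ∃ μ : ℂ, T j (e i) = μ • e i := by
  induction n generalizing W with
  | zero => exact ⟨Fin.elim0, fun i => i.elim0, .of_isEmpty _, fun i => i.elim0,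
      fun _ i => i.elim0⟩
  | succ n ih =>
    have hW0 : W ≠ ⊥ := by
      rintro rfl
      simp at hW
    obtain ⟨v, hvW, hv0, hv⟩ :=
      Module.End.exists_mem_ne_zero_forall_apply_eq_smul T hcomm hW0 hWT
    set u : E := ((‖v‖ : ℂ)⁻¹) • v
    have hu1 : ‖u‖ = 1 := norm_smul_inv_norm hv0
    have huW : u ∈ W := W.smul_mem _ hvW
    choose μ hμ using hv
    have hu : ∀ j, T j u = μ j • u := fun j => by
      rw [LinearMap.map_smul, hμ, smul_comm]
    set K := Submodule.span ℂ {u, J u}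
    have hKW : K ≤ W := by
      rw [Submodule.span_le, Set.insert_subset_iff, Set.singleton_subset_iff]
      exact ⟨huW, hWJ u huW⟩
    obtain ⟨e, heW, he_on, heJ, he⟩ := ih (Kᗮ ⊓ W)
      (Submodule.finrank_add_inf_finrank_orthogonal' hKW
        (by rw [J.finrank_span_pair hu1, hW]; ring))
      (fun j => Module.End.invtSubmodule.inf_mem
        (J.orthogonal_span_pair_mem_invtSubmodule (hnormal j) (hTJ j) (hu j))
        (hWT j))
      (fun x hx => ⟨J.map_mem_orthogonal_span_pair hx.1, hWJ x hx.2⟩)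
    have he_perp : ∀ i, ⟪u, e i⟫_ℂ = 0 ∧ ⟪J u, e i⟫_ℂ = 0 := fun i =>
      Submodule.mem_orthogonal_span_pair.mp (heW i).1
    refine ⟨Matrix.vecCons u e, ?_, ?_, ?_, ?_⟩
    · exact Fin.cases huW fun i => (heW i).2
    · exact orthonormal_vecCons_iff.mpr ⟨hu1, fun i => (he_perp i).1, he_on⟩
    · intro i i'
      cases i using Fin.cases <;> cases i' using Fin.cases
      · exact J.inner_self_map u
      · simp [J.inner_map_right, (he_perp _).2]
      · simp only [Matrix.cons_val_succ, Matrix.cons_val_zero]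
        rw [← inner_conj_symm, (he_perp _).2, map_zero]
      · exact heJ _ _
    · exact fun j => Fin.cases ⟨μ j, hu j⟩ (he j)

end QuaternionicStructure

section Symplectic

variable {N : ℕ}

theorem Zmat_transpose : (Zmat N)ᵀ = -Zmat N := by
  simp [Zmat, fromBlocks_transpose, fromBlocks_neg]

theorem Zmat_mul_Zmat : Zmat N * Zmat N = -1 := by
  simp [Zmat, fromBlocks_multiply, ← fromBlocks_one, fromBlocks_neg]

theorem map_conj_eq_of_conjTranspose_eq_dual {X : Matrix (Fin N ⊕ Fin N) (Fin N ⊕ Fin N) ℂ}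
    (hq : Xᴴ = dual X) : X.map (starRingEnd ℂ) = -(Zmat N * X * Zmat N) :=
  calc X.map (starRingEnd ℂ) = (Xᴴ)ᵀ := rfl
    _ = -(Zmat N * X * Zmat N) := by
      simp [hq, dual, transpose_mul, Zmat_transpose, Matrix.mul_assoc]

theorem mul_Zmat_of_conjTranspose_eq_dual {X : Matrix (Fin N ⊕ Fin N) (Fin N ⊕ Fin N) ℂ}
    (hq : Xᴴ = dual X) : X * Zmat N = Zmat N * X.map (starRingEnd ℂ) := by
  rw [map_conj_eq_of_conjTranspose_eq_dual hq, Matrix.mul_neg, ← Matrix.mul_assoc,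
    ← Matrix.mul_assoc, Zmat_mul_Zmat]
  simp

theorem Tmap_eq_neg_Zmat_mulVec (ξ : Fin N ⊕ Fin N → ℂ) : Tmap ξ = -(Zmat N *ᵥ star ξ) := by
  ext (i | i) <;> simp [Tmap, Zmat, fromBlocks_mulVec, neg_mulVec]

theorem mulVec_Tmap_of_conjTranspose_eq_dual {X : Matrix (Fin N ⊕ Fin N) (Fin N ⊕ Fin N) ℂ}
    (hq : Xᴴ = dual X) (ξ : Fin N ⊕ Fin N → ℂ) : X *ᵥ Tmap ξ = Tmap (X *ᵥ ξ) := by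
  have hconj : X.map (starRingEnd ℂ) *ᵥ star ξ = star (X *ᵥ ξ) := by
    ext a
    simp [mulVec, dotProduct]
  rw [Tmap_eq_neg_Zmat_mulVec, Tmap_eq_neg_Zmat_mulVec, mulVec_neg, mulVec_mulVec,
    mul_Zmat_of_conjTranspose_eq_dual hq, ← mulVec_mulVec, hconj]

noncomputable def stdQuaternionicStructure (N : ℕ) :
    QuaternionicStructure (EuclideanSpace ℂ (Fin N ⊕ Fin N)) where
  toFun v := WithLp.toLp 2 (Tmap v)
  map_smul' c v := by
    ext (i | i) <;> simp [Tmap]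
  inner_map_map' x y := by
    simp only [PiLp.inner_apply, RCLike.inner_apply, Fintype.sum_sum_type, map_add, map_sum]
    simp [Tmap, add_comm]
  map_map' v := by
    ext (i | i) <;> simp [Tmap]

theorem toEuclideanLin_stdQuaternionicStructure
    {X : Matrix (Fin N ⊕ Fin N) (Fin N ⊕ Fin N) ℂ} (hq : Xᴴ = dual X)
    (v : EuclideanSpace ℂ (Fin N ⊕ Fin N)) :
    toEuclideanLin X (stdQuaternionicStructure N v) =
      stdQuaternionicStructure N (toEuclideanLin X v) :=
  congrArg (WithLp.toLp 2) (mulVec_Tmap_of_conjTranspose_eq_dual hq v)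

end Symplectic

namespace Matrix

def ofCols {ι : Type*} (v : ι → EuclideanSpace ℂ ι) : Matrix ι ι ℂ := of fun a b => v b a

variable {ι : Type*} [Fintype ι] [DecidableEq ι]

theorem conjTranspose_ofCols_mul_mul_ofCols_apply (v : ι → EuclideanSpace ℂ ι)
    (A : Matrix ι ι ℂ) (a b : ι) :
    ((ofCols v)ᴴ * A * ofCols v) a b = ⟪v a, toEuclideanLin A (v b)⟫_ℂ := by
  simp only [mul_apply, conjTranspose_apply, ofCols, of_apply, PiLp.inner_apply,
    RCLike.inner_apply, toLpLin_apply, mulVec, dotProduct, Finset.sum_mul]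
  rw [Finset.sum_comm]
  exact Finset.sum_congr rfl fun c _ => Finset.sum_congr rfl fun d _ => by simp; ring

theorem conjTranspose_ofCols_mul_mul_ofCols_eq_diagonal {v : ι → EuclideanSpace ℂ ι}
    (hv : Orthonormal ℂ v) {A : Matrix ι ι ℂ} {d : ι → ℂ}
    (hA : ∀ b, toEuclideanLin A (v b) = d b • v b) :
    (ofCols v)ᴴ * A * ofCols v = diagonal d := by
  ext a b
  rw [conjTranspose_ofCols_mul_mul_ofCols_apply, hA, inner_smul_right,
    orthonormal_iff_ite.mp hv, diagonal_apply]
  split_ifs <;> simp_all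

theorem ofCols_mem_unitaryGroup {v : ι → EuclideanSpace ℂ ι} (hv : Orthonormal ℂ v) :
    ofCols v ∈ unitaryGroup ι ℂ := by
  rw [mem_unitaryGroup_iff', star_eq_conjTranspose, ← Matrix.mul_one (ofCols v)ᴴ,
    conjTranspose_ofCols_mul_mul_ofCols_eq_diagonal hv (d := fun _ => 1) (by simp),
    diagonal_one]

theorem transpose_ofCols_mul_Zmat_mul_ofCols_apply {N : ℕ}
    (v : Fin N ⊕ Fin N → EuclideanSpace ℂ (Fin N ⊕ Fin N)) (a b : Fin N ⊕ Fin N) :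
    ((ofCols v)ᵀ * Zmat N * ofCols v) a b = ⟪stdQuaternionicStructure N (v a), v b⟫_ℂ := by
  simp only [mul_apply, transpose_apply, ofCols, of_apply, PiLp.inner_apply, RCLike.inner_apply,
    Fintype.sum_sum_type, Zmat, fromBlocks_apply₁₁, fromBlocks_apply₁₂, fromBlocks_apply₂₁,
    fromBlocks_apply₂₂]
  simp [stdQuaternionicStructure, Tmap, one_apply, mul_comm, add_comm]

theorem transpose_ofCols_mul_Zmat_mul_ofCols_of_orthonormal {N : ℕ}
    {e : Fin N → EuclideanSpace ℂ (Fin N ⊕ Fin N)}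
    (he : Orthonormal ℂ (Sum.elim e fun i => stdQuaternionicStructure N (e i))) :
    (ofCols (Sum.elim e fun i => stdQuaternionicStructure N (e i)))ᵀ * Zmat N *
      ofCols (Sum.elim e fun i => stdQuaternionicStructure N (e i)) = Zmat N := by
  ext (i | i) b <;> rw [transpose_ofCols_mul_Zmat_mul_ofCols_apply]
  · rw [Sum.elim_inl, ← Sum.elim_inr e fun i => stdQuaternionicStructure N (e i),
      orthonormal_iff_ite.mp he]
    rcases b with i' | i' <;> simp [Zmat, one_apply]
  · rw [Sum.elim_inr, QuaternionicStructure.map_map, inner_neg_left,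
      ← Sum.elim_inl e fun i => stdQuaternionicStructure N (e i), orthonormal_iff_ite.mp he]
    rcases b with i' | i' <;> simp [Zmat, one_apply]

end Matrix

theorem quaternionic_spectral {N k : ℕ} (X : Fin k → Matrix (Fin N ⊕ Fin N) (Fin N ⊕ Fin N) ℂ)
    (hcomm : ∀ i j, Commute (X i) (X j)) (hq : ∀ j, (X j)ᴴ = dual (X j))
    (hnormal : ∀ j, X j * (X j)ᴴ = (X j)ᴴ * X j) :
    ∃ U : Matrix (Fin N ⊕ Fin N) (Fin N ⊕ Fin N) ℂ,
      U ∈ Matrix.unitaryGroup (Fin N ⊕ Fin N) ℂ ∧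
      Uᵀ * Zmat N * U = Zmat N ∧
      ∀ j, ∃ D : Matrix (Fin N) (Fin N) ℂ, D.IsDiag ∧
        Uᴴ * X j * U = Matrix.fromBlocks D 0 0 (D.map (starRingEnd ℂ)) := by
  set J := stdQuaternionicStructure N
  have hT_normal : ∀ j, Commute (toEuclideanLin (X j)) (LinearMap.adjoint (toEuclideanLin (X j))) :=
    fun j => by
      rw [← toEuclideanLin_conjTranspose_eq_adjoint]
      exact Commute.map (hnormal j) (toLpLinAlgEquiv 2)
  obtain ⟨e, -, he_on, heJ, he⟩ := J.exists_orthonormal_commonEigenvectors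
    (fun j => toEuclideanLin (X j)) (fun i j => (hcomm i j).map (toLpLinAlgEquiv 2)) hT_normal
    (fun j => toEuclideanLin_stdQuaternionicStructure (hq j)) N ⊤ (by simp [two_mul])
    (fun _ => Module.End.invtSubmodule.top_mem _) (fun _ _ => Submodule.mem_top)
  choose d hd using he
  have hv := J.orthonormal_sumElim he_on heJ
  refine ⟨ofCols _, ofCols_mem_unitaryGroup hv,
    transpose_ofCols_mul_Zmat_mul_ofCols_of_orthonormal hv,
    fun j => ⟨diagonal (d j), isDiag_diagonal _, ?_⟩⟩
  rw [conjTranspose_ofCols_mul_mul_ofCols_eq_diagonal hv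
      (d := Sum.elim (d j) fun i => conj (d j i)),
    diagonal_map (map_zero _), fromBlocks_diagonal]
  rintro (i | i)
  · exact hd j i
  · rw [Sum.elim_inr, Sum.elim_inr, toEuclideanLin_stdQuaternionicStructure (hq j), hd j i,
      J.map_smul]
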